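/- Let X be a fixed everywhere percolating subgraph of ℤ², let ε ∈ (0,1), and let Y = Y(X,ε) be obtained from X by ε-Bernoulli addition. Then for any two dual vertices x, y ∈ ℤ²_dual, the probability that x and y are connected in the dual configuration Y* is at most (1−ε)^{|x−y|₁}, where |x−y|₁ denotes L¹-distance. -/

import Mathlib

/-!
A cycle of `X*` would enclose a primal vertex. Indeed, for a closed set `S` of dual edges the
parity of the number of edges of `S` crossed by the horizontal ray from a primal vertex `v`
(the mod 2 winding number of `S` around `v`) changes exactly across the primal edges whose dual
edge lies in `S`, vanishes outside a bounded region, and equals `1` next to any edge of `S`.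
No edge of `X` crosses `X*`, so the winding number is constant on clusters of `X`, and the
cluster of a vertex of winding number `1` would be finite. Hence `X*` is a forest.

Since `Y* ⊆ X*`, two dual vertices `x`, `y` are connected in `Y*` only along the unique path
of `X*` joining them. This path has at least `|x - y|₁` edges, and the primal edges crossing
them are distinct and must all be absent from `Y`; by independence this has probability
`(1 - ε) ^ length ≤ (1 - ε) ^ |x - y|₁`.
-/

open MeasureTheory ProbabilityTheory

/-- Vertices of the `ℤ²` lattice. -/
abbrev V2 : Type := ℤ × ℤ

/-- `L¹` distance on `ℤ²` (also used for dual vertices, in shifted coordinates). -/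
def dist1 (x y : V2) : ℕ := (x.1 - y.1).natAbs + (x.2 - y.2).natAbs

/-- Two vertices of `ℤ²` are nearest neighbors iff their `L¹` distance is `1`. -/
def latticeAdj (x y : V2) : Prop := dist1 x y = 1

/-- The edges of the `ℤ²` lattice graph, as unordered pairs of vertices. -/
def latticeEdges : Set (Sym2 V2) := {e | ∃ x y, latticeAdj x y ∧ e = s(x, y)}

/-- The graph on `ℤ²` determined by an edge configuration `Z`:
`x` and `y` are adjacent iff they are nearest neighbors and the edge `⟨x,y⟩` belongs to `Z`. -/
def graphOf (Z : Set (Sym2 V2)) : SimpleGraph V2 where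
  Adj x y := latticeAdj x y ∧ s(x, y) ∈ Z
  symm := by
    refine ⟨fun x y h => ?_⟩
    refine ⟨?_, ?_⟩
    · have := h.1; unfold latticeAdj dist1 at *; omega
    · rw [Sym2.eq_swap]; exact h.2
  loopless := by
    refine ⟨fun x h => ?_⟩
    have := h.1; unfold latticeAdj dist1 at this; omega

/-- The connected component of `x` in the configuration `Z` is infinite. -/
def compInfinite (Z : Set (Sym2 V2)) (x : V2) : Prop :=
  {y | (graphOf Z).Reachable x y}.Infinite

/-- `X` is an everywhere percolating subgraph of `ℤ²`: it is a set of lattice edges and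
every vertex lies in an infinite connected component of `X`. -/
def EverywherePercolating (X : Set (Sym2 V2)) : Prop :=
  X ⊆ latticeEdges ∧ ∀ x : V2, compInfinite X x

/-- The dual configuration `Z*`.  A dual vertex `d` stands for the point `d + (1/2, 1/2)` of the
dual lattice `ℤ² + (1/2,1/2)`.  The dual edge joining `(a, b-1)` and `(a, b)` crosses the primal
horizontal edge from `(a, b)` to `(a+1, b)`, and the dual edge joining `(a-1, b)` and `(a, b)`
crosses the primal vertical edge from `(a, b)` to `(a, b+1)`.  A dual edge is present in `Z*`
iff the primal edge crossing it is absent from `Z`. -/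
def dualConfig (Z : Set (Sym2 V2)) : Set (Sym2 V2) :=
  {e | ∃ a b : ℤ,
    (e = s(((a, b - 1) : V2), ((a, b) : V2)) ∧ s(((a, b) : V2), ((a + 1, b) : V2)) ∉ Z) ∨
    (e = s(((a - 1, b) : V2), ((a, b) : V2)) ∧ s(((a, b) : V2), ((a, b + 1) : V2)) ∉ Z)}

/-- The box `Λ(x, m) = x + [-m/2, m/2]²`, as a set of vertices of `ℤ²`. -/
def box (x : V2) (m : ℕ) : Set V2 :=
  {y | 2 * (y.1 - x.1).natAbs ≤ m ∧ 2 * (y.2 - x.2).natAbs ≤ m}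

/-- The dual vertex `d` (representing the point `d + (1/2,1/2)`) lies in the box
`Λ(x, m) = x + [-m/2, m/2]²`. -/
def dualMemBox (x : V2) (m : ℕ) (d : V2) : Prop :=
  (2 * (d.1 - x.1) + 1).natAbs ≤ m ∧ (2 * (d.2 - x.2) + 1).natAbs ≤ m

/-- `B` is a family of independent `{0,1}`-valued random variables, indexed by the (potential)
edges of `ℤ²`, each taking the value `true` with probability `p`. -/
def BernoulliFamily {Ω : Type} [MeasurableSpace Ω] (μ : Measure Ω) (p : ℝ)
    (B : Sym2 V2 → Ω → Bool) : Prop :=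
  (∀ e, Measurable (B e)) ∧
  iIndepFun B μ ∧
  ∀ e, μ {ω | B e ω = true} = ENNReal.ofReal p

/-- The configuration obtained from `X` by `ε`-Bernoulli addition, in the sample point `ω`:
an edge of `ℤ²` is present iff it is in `X` or the corresponding Bernoulli variable is `true`. -/
def addConfig {Ω : Type} (X : Set (Sym2 V2)) (B : Sym2 V2 → Ω → Bool) (ω : Ω) :
    Set (Sym2 V2) :=
  X ∪ {e ∈ latticeEdges | B e ω = true}

/-- The vertex `n • x` of `ℤ²`. -/
def scale (n : ℕ) (x : V2) : V2 := ((n : ℤ) * x.1, (n : ℤ) * x.2)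

/-- `nx` and `ny` are closely connected in the configuration `Z`: there is a path in `Z` from
`nx` to `ny` inside `Λ(nx, n) ∪ Λ(ny, n)`. -/
def CloselyConnected (Z : Set (Sym2 V2)) (n : ℕ) (x y : V2) : Prop :=
  ∃ w : (graphOf Z).Walk (scale n x) (scale n y),
    ∀ v ∈ w.support, v ∈ box (scale n x) n ∪ box (scale n y) n

/-- The renormalized configuration `Z̃ₙ`: the edge `⟨x,y⟩` of `ℤ²` is present iff `nx` and `ny`
are closely connected in `Z`. -/
def renorm (Z : Set (Sym2 V2)) (n : ℕ) : Set (Sym2 V2) :=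
  {e | ∃ x y : V2, latticeAdj x y ∧ e = s(x, y) ∧ CloselyConnected Z n x y}

section Graph

variable {V : Type*}

def endpointSum (χ : V → ZMod 2) : Sym2 V → ZMod 2 :=
  Sym2.lift ⟨fun u v => χ u + χ v, fun _ _ => add_comm _ _⟩

@[simp] lemma endpointSum_mk (χ : V → ZMod 2) (u v : V) :
    endpointSum χ s(u, v) = χ u + χ v := rfl

lemma SimpleGraph.Walk.sum_map_endpointSum {G : SimpleGraph V} {u v : V} (w : G.Walk u v)
    (χ : V → ZMod 2) : (w.edges.map (endpointSum χ)).sum = χ u + χ v := by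
  induction w with
  | nil => exact (CharTwo.add_self_eq_zero _).symm
  | cons _ _ ih =>
    rw [SimpleGraph.Walk.edges_cons, List.map_cons, List.sum_cons, ih, endpointSum_mk]
    grind

lemma SimpleGraph.Walk.IsTrail.sum_endpointSum_eq_zero [DecidableEq V] {G : SimpleGraph V}
    {u : V} {w : G.Walk u u} (hw : w.IsTrail) (χ : V → ZMod 2) :
    ∑ e ∈ w.edges.toFinset, endpointSum χ e = 0 := by
  rw [List.sum_toFinset _ hw.edges_nodup, w.sum_map_endpointSum, CharTwo.add_self_eq_zero]

lemma SimpleGraph.IsAcyclic.edges_subset_edgeSet_of_reachable {G H : SimpleGraph V}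
    (hG : G.IsAcyclic) (hHG : H ≤ G) {u v : V} {p : G.Walk u v} (hp : p.IsPath)
    (h : H.Reachable u v) : ∀ e ∈ p.edges, e ∈ H.edgeSet := by
  classical
  obtain ⟨w⟩ := h
  have hpw : (⟨p, hp⟩ : G.Path u v) = (w.mapLe hHG).toPath :=
    (hG.subsingleton_path u v).elim _ _
  intro e he
  have he' : e ∈ ((w.mapLe hHG).toPath : G.Walk u v).edges := hpw ▸ he
  apply w.edges_subset_edgeSet
  simpa using SimpleGraph.Walk.edges_toPath_subset_edges _ he'

end Graph

def hEdge (a b : ℤ) : Sym2 V2 := s((a, b), (a + 1, b))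

def vEdge (a b : ℤ) : Sym2 V2 := s((a, b), (a, b + 1))

def hEdgeDual (a b : ℤ) : Sym2 V2 := s((a, b - 1), (a, b))

def vEdgeDual (a b : ℤ) : Sym2 V2 := s((a - 1, b), (a, b))

@[simp] lemma hEdge_inj {a b a' b' : ℤ} : hEdge a b = hEdge a' b' ↔ a = a' ∧ b = b' := by
  simp [hEdge, Prod.ext_iff]; omega

@[simp] lemma vEdge_inj {a b a' b' : ℤ} : vEdge a b = vEdge a' b' ↔ a = a' ∧ b = b' := by
  simp [vEdge, Prod.ext_iff]; omega

@[simp] lemma hEdge_ne_vEdge {a b a' b' : ℤ} : hEdge a b ≠ vEdge a' b' := by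
  simp [hEdge, vEdge, Prod.ext_iff]; omega

@[simp] lemma vEdge_ne_hEdge {a b a' b' : ℤ} : vEdge a b ≠ hEdge a' b' :=
  hEdge_ne_vEdge.symm

@[simp] lemma hEdgeDual_inj {a b a' b' : ℤ} :
    hEdgeDual a b = hEdgeDual a' b' ↔ a = a' ∧ b = b' := by
  simp [hEdgeDual, Prod.ext_iff]; omega

@[simp] lemma vEdgeDual_inj {a b a' b' : ℤ} :
    vEdgeDual a b = vEdgeDual a' b' ↔ a = a' ∧ b = b' := by
  simp [vEdgeDual, Prod.ext_iff]; omega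

@[simp] lemma hEdgeDual_ne_vEdgeDual {a b a' b' : ℤ} : hEdgeDual a b ≠ vEdgeDual a' b' := by
  simp [hEdgeDual, vEdgeDual, Prod.ext_iff]; omega

@[simp] lemma vEdgeDual_ne_hEdgeDual {a b a' b' : ℤ} : vEdgeDual a b ≠ hEdgeDual a' b' :=
  hEdgeDual_ne_vEdgeDual.symm

lemma hEdge_mem_latticeEdges (a b : ℤ) : hEdge a b ∈ latticeEdges :=
  ⟨_, _, by simp [latticeAdj, dist1], rfl⟩

lemma vEdge_mem_latticeEdges (a b : ℤ) : vEdge a b ∈ latticeEdges :=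
  ⟨_, _, by simp [latticeAdj, dist1], rfl⟩

lemma mem_dualConfig {Z : Set (Sym2 V2)} {e : Sym2 V2} :
    e ∈ dualConfig Z ↔
      ∃ a b, (e = hEdgeDual a b ∧ hEdge a b ∉ Z) ∨ (e = vEdgeDual a b ∧ vEdge a b ∉ Z) :=
  Iff.rfl

lemma dualConfig_anti {Z Z' : Set (Sym2 V2)} (h : Z ⊆ Z') : dualConfig Z' ⊆ dualConfig Z := by
  rintro e ⟨a, b, ⟨he, hZ⟩ | ⟨he, hZ⟩⟩
  exacts [⟨a, b, .inl ⟨he, mt (@h _) hZ⟩⟩, ⟨a, b, .inr ⟨he, mt (@h _) hZ⟩⟩]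

lemma graphOf_mono {Z Z' : Set (Sym2 V2)} (h : Z ⊆ Z') : graphOf Z ≤ graphOf Z' :=
  fun _ _ hadj => ⟨hadj.1, h hadj.2⟩

lemma mem_of_mem_edgeSet_graphOf {Z : Set (Sym2 V2)} {e : Sym2 V2}
    (h : e ∈ (graphOf Z).edgeSet) : e ∈ Z := by
  induction e using Sym2.ind with
  | _ u v => exact h.2

lemma dist1_le_length {Z : Set (Sym2 V2)} {u v : V2} (w : (graphOf Z).Walk u v) :
    dist1 u v ≤ w.length := by
  induction w with
  | nil => simp [dist1]
  | cons h _ ih =>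
    have := h.1
    simp only [latticeAdj, dist1, SimpleGraph.Walk.length_cons] at *
    omega

/-- The primal edge crossed by a dual edge; a junk value on pairs that are not dual edges. -/
def crossing : Sym2 V2 → Sym2 V2 :=
  Sym2.lift ⟨fun u v =>
      if u.1 = v.1 then hEdge u.1 (max u.2 v.2) else vEdge (max u.1 v.1) (max u.2 v.2),
    fun u v => by
      by_cases h : u.1 = v.1
      · simp [h, max_comm]
      · simp [h, Ne.symm h, max_comm]⟩

@[simp] lemma crossing_hEdgeDual (a b : ℤ) : crossing (hEdgeDual a b) = hEdge a b := by
  simp [crossing, hEdgeDual]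

@[simp] lemma crossing_vEdgeDual (a b : ℤ) : crossing (vEdgeDual a b) = vEdge a b := by
  simp [crossing, vEdgeDual]

lemma crossing_notMem_of_mem_dualConfig {Z : Set (Sym2 V2)} {e : Sym2 V2}
    (he : e ∈ dualConfig Z) : crossing e ∉ Z := by
  obtain ⟨a, b, ⟨rfl, hZ⟩ | ⟨rfl, hZ⟩⟩ := mem_dualConfig.1 he <;> simpa

lemma crossing_mem_latticeEdges_of_mem_dualConfig {Z : Set (Sym2 V2)} {e : Sym2 V2}
    (he : e ∈ dualConfig Z) : crossing e ∈ latticeEdges := by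
  obtain ⟨a, b, ⟨rfl, -⟩ | ⟨rfl, -⟩⟩ := mem_dualConfig.1 he
  exacts [by simpa using hEdge_mem_latticeEdges a b, by simpa using vEdge_mem_latticeEdges a b]

lemma crossing_injOn_dualConfig (Z : Set (Sym2 V2)) : Set.InjOn crossing (dualConfig Z) := by
  intro e he e' he' h
  obtain ⟨a, b, ⟨rfl, -⟩ | ⟨rfl, -⟩⟩ := mem_dualConfig.1 he <;>
  obtain ⟨a', b', ⟨rfl, -⟩ | ⟨rfl, -⟩⟩ := mem_dualConfig.1 he' <;> simp_all

lemma card_toFinset_map_crossing {Z : Set (Sym2 V2)} {u v : V2}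
    {p : (graphOf (dualConfig Z)).Walk u v} (hp : p.IsTrail) :
    (p.edges.map crossing).toFinset.card = p.length := by
  have hdual {e : Sym2 V2} (he : e ∈ p.edges) : e ∈ dualConfig Z :=
    mem_of_mem_edgeSet_graphOf (p.edges_subset_edgeSet he)
  rw [List.toFinset_card_of_nodup, List.length_map, SimpleGraph.Walk.length_edges]
  exact hp.edges_nodup.map_on fun e he e' he' h =>
    crossing_injOn_dualConfig Z (hdual he) (hdual he') h

-- The dual edges crossing the primal edges `hEdge a v.2`, `a ≥ v.1`, i.e. the horizontal ray
-- from `v` to the right.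
def rightRay (v : V2) : Set (Sym2 V2) := {e | ∃ a, v.1 ≤ a ∧ e = hEdgeDual a v.2}

@[simp] lemma hEdgeDual_mem_rightRay {a b : ℤ} {v : V2} :
    hEdgeDual a b ∈ rightRay v ↔ v.1 ≤ a ∧ b = v.2 := by
  simp [rightRay]

@[simp] lemma vEdgeDual_notMem_rightRay {a b : ℤ} {v : V2} : vEdgeDual a b ∉ rightRay v := by
  simp [rightRay]

open Classical in
noncomputable def winding (S : Finset (Sym2 V2)) (v : V2) : ZMod 2 :=
  ∑ e ∈ S, if e ∈ rightRay v then 1 else 0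

lemma winding_eq_zero_of_forall_lt {S : Finset (Sym2 V2)} {v : V2}
    (hv : ∀ a, hEdgeDual a v.2 ∈ S → a < v.1) : winding S v = 0 := by
  refine Finset.sum_eq_zero fun e he => if_neg ?_
  rintro ⟨a, ha, rfl⟩
  exact (hv a he).not_ge ha

section Winding

variable {Z : Set (Sym2 V2)} {S : Finset (Sym2 V2)} (hSZ : ↑S ⊆ dualConfig Z)
include hSZ

lemma winding_eq_winding_add_hEdgeDual (a b : ℤ) :
    winding S (a, b) = winding S (a + 1, b) + if hEdgeDual a b ∈ S then 1 else 0 := by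
  rw [winding, winding, ← Finset.sum_ite_eq' S _ fun _ => 1, ← Finset.sum_add_distrib]
  refine Finset.sum_congr rfl fun e he => ?_
  obtain ⟨a', b', ⟨rfl, -⟩ | ⟨rfl, -⟩⟩ := mem_dualConfig.1 (hSZ he) <;>
    simp only [hEdgeDual_mem_rightRay, vEdgeDual_notMem_rightRay, hEdgeDual_inj,
      vEdgeDual_ne_hEdgeDual, ↓reduceIte] <;>
    (try split_ifs) <;> first | omega | decide

lemma winding_eq_of_hEdge_mem {a b : ℤ} (h : hEdge a b ∈ Z) :
    winding S (a, b) = winding S (a + 1, b) := by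
  have hnot : hEdgeDual a b ∉ S := fun hm => by
    simpa [h] using crossing_notMem_of_mem_dualConfig (hSZ hm)
  rw [winding_eq_winding_add_hEdgeDual hSZ, if_neg hnot, add_zero]

end Winding

section Closed

-- `hS` says that every vertex has even degree in `S`.
variable {Z : Set (Sym2 V2)} {S : Finset (Sym2 V2)} (hSZ : ↑S ⊆ dualConfig Z)
  (hS : ∀ χ : V2 → ZMod 2, ∑ e ∈ S, endpointSum χ e = 0)
include hSZ hS

lemma winding_eq_winding_add_vEdgeDual (a b : ℤ) :
    winding S (a, b) = winding S (a, b + 1) + if vEdgeDual a b ∈ S then 1 else 0 := by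
  -- Test `hS` against the dual half-row `{(c, b) | a ≤ c}` lying between the two rays.
  have hsum : winding S (a, b) + winding S (a, b + 1) + (if vEdgeDual a b ∈ S then 1 else 0) =
      ∑ e ∈ S, endpointSum (fun w => if w.2 = b ∧ a ≤ w.1 then 1 else 0) e := by
    rw [winding, winding, ← Finset.sum_ite_eq' S _ fun _ => 1, ← Finset.sum_add_distrib,
      ← Finset.sum_add_distrib]
    refine Finset.sum_congr rfl fun e he => ?_
    obtain ⟨a', b', ⟨rfl, -⟩ | ⟨rfl, -⟩⟩ := mem_dualConfig.1 (hSZ he) <;>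
      simp only [hEdgeDual_mem_rightRay, vEdgeDual_notMem_rightRay, vEdgeDual_inj,
        hEdgeDual_ne_vEdgeDual, ↓reduceIte] <;>
      simp only [hEdgeDual, vEdgeDual, endpointSum_mk] <;>
      (try split_ifs) <;> first | omega | decide
  rw [hS] at hsum
  grind

-- The ray then crosses every edge of `S` in its row, and there is an even number of these, as
-- `hS` shows when tested against the dual half-plane below the ray.
lemma winding_eq_zero_of_forall_le {v : V2} (hv : ∀ a, hEdgeDual a v.2 ∈ S → v.1 ≤ a) :
    winding S v = 0 := by
  rw [← hS fun w => if w.2 < v.2 then 1 else 0, winding]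
  refine Finset.sum_congr rfl fun e he => ?_
  obtain ⟨a', b', ⟨rfl, -⟩ | ⟨rfl, -⟩⟩ := mem_dualConfig.1 (hSZ he)
  · simp only [hEdgeDual_mem_rightRay,
      and_iff_right_of_imp fun (hb : b' = v.2) => hv a' (hb ▸ he)]
    simp only [hEdgeDual, endpointSum_mk]
    (try split_ifs) <;> first | omega | decide
  · simp only [vEdgeDual_notMem_rightRay, ↓reduceIte]
    simp only [vEdgeDual, endpointSum_mk, CharTwo.add_self_eq_zero]

lemma finite_setOf_winding_ne_zero : {v | winding S v ≠ 0}.Finite := by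
  have hrow : {p : V2 | hEdgeDual p.1 p.2 ∈ S}.Finite :=
    S.finite_toSet.preimage fun p _ q _ h => Prod.ext_iff.2 (hEdgeDual_inj.1 h)
  obtain ⟨lo, hlo⟩ := hrow.bddBelow
  obtain ⟨hi, hhi⟩ := hrow.bddAbove
  refine (Set.finite_Icc lo hi).subset fun v hv => ?_
  obtain ⟨a, ha, hva⟩ : ∃ a, hEdgeDual a v.2 ∈ S ∧ v.1 ≤ a := by
    by_contra! h
    exact hv (winding_eq_zero_of_forall_lt h)
  obtain ⟨a', ha', hav⟩ : ∃ a, hEdgeDual a v.2 ∈ S ∧ a < v.1 := by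
    by_contra! h
    exact hv (winding_eq_zero_of_forall_le hSZ hS h)
  have hhi' := hhi (show (a, v.2) ∈ _ from ha)
  have hlo' := hlo (show (a', v.2) ∈ _ from ha')
  simp only [Set.mem_Icc, Prod.le_def] at hhi' hlo' ⊢
  omega

lemma exists_winding_ne_zero (hne : S.Nonempty) : ∃ v, winding S v ≠ 0 := by
  obtain ⟨e, he⟩ := hne
  by_contra! h
  obtain ⟨a, b, ⟨rfl, -⟩ | ⟨rfl, -⟩⟩ := mem_dualConfig.1 (hSZ he)
  · simpa [h, he] using winding_eq_winding_add_hEdgeDual hSZ a b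
  · simpa [h, he] using winding_eq_winding_add_vEdgeDual hSZ hS a b

lemma winding_eq_of_vEdge_mem {a b : ℤ} (h : vEdge a b ∈ Z) :
    winding S (a, b) = winding S (a, b + 1) := by
  have hnot : vEdgeDual a b ∉ S := fun hm => by
    simpa [h] using crossing_notMem_of_mem_dualConfig (hSZ hm)
  rw [winding_eq_winding_add_vEdgeDual hSZ hS, if_neg hnot, add_zero]

lemma winding_eq_of_adj {v w : V2} (h : (graphOf Z).Adj v w) : winding S v = winding S w := by
  obtain ⟨v1, v2⟩ := v
  obtain ⟨w1, w2⟩ := w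
  obtain ⟨hadj, hZ⟩ := h
  simp only [latticeAdj, dist1] at hadj
  rcases (by omega : (w1 = v1 + 1 ∧ w2 = v2) ∨ (v1 = w1 + 1 ∧ v2 = w2) ∨
      (w1 = v1 ∧ w2 = v2 + 1) ∨ (v1 = w1 ∧ v2 = w2 + 1)) with
    ⟨rfl, rfl⟩ | ⟨rfl, rfl⟩ | ⟨rfl, rfl⟩ | ⟨rfl, rfl⟩
  · exact winding_eq_of_hEdge_mem hSZ hZ
  · exact (winding_eq_of_hEdge_mem hSZ (by rwa [Sym2.eq_swap] at hZ)).symm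
  · exact winding_eq_of_vEdge_mem hSZ hS hZ
  · exact (winding_eq_of_vEdge_mem hSZ hS (by rwa [Sym2.eq_swap] at hZ)).symm

lemma winding_eq_of_reachable {v w : V2} (h : (graphOf Z).Reachable v w) :
    winding S v = winding S w := by
  obtain ⟨p⟩ := h
  induction p with
  | nil => rfl
  | cons hadj _ ih => exact (winding_eq_of_adj hSZ hS hadj).trans ih

end Closed

theorem isAcyclic_graphOf_dualConfig {X : Set (Sym2 V2)} (hX : EverywherePercolating X) :
    (graphOf (dualConfig X)).IsAcyclic := by
  intro u C hC
  have hSX : ↑C.edges.toFinset ⊆ dualConfig X := fun e he =>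
    mem_of_mem_edgeSet_graphOf (C.edges_subset_edgeSet (List.mem_toFinset.1 he))
  have hS := hC.isTrail.sum_endpointSum_eq_zero
  obtain ⟨v, hv⟩ := exists_winding_ne_zero hSX hS
    ((List.toFinset_nonempty_iff _).2 (SimpleGraph.Walk.edges_eq_nil.not.2 hC.not_nil))
  exact hX.2 v <| (finite_setOf_winding_ne_zero hSX hS).subset fun w hw =>
    (winding_eq_of_reachable hSX hS hw).symm.trans_ne hv

section Bernoulli

variable {Ω : Type} {X : Set (Sym2 V2)} {B : Sym2 V2 → Ω → Bool}

lemma crossing_eq_false_of_mem_dualConfig_addConfig {ω : Ω} {e : Sym2 V2}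
    (he : e ∈ dualConfig (addConfig X B ω)) : B (crossing e) ω = false := by
  have h := crossing_notMem_of_mem_dualConfig he
  simp only [addConfig, Set.mem_union, Set.mem_ofPred_eq, not_or, not_and] at h
  simpa using h.2 (crossing_mem_latticeEdges_of_mem_dualConfig he)

lemma setOf_reachable_subset_forall_crossing_eq_false (hX : EverywherePercolating X)
    {x y : V2} {p : (graphOf (dualConfig X)).Walk x y} (hp : p.IsPath) :
    {ω | (graphOf (dualConfig (addConfig X B ω))).Reachable x y} ⊆
      {ω | ∀ c ∈ (p.edges.map crossing).toFinset, B c ω = false} := by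
  intro ω hω
  simp only [Set.mem_ofPred_eq, List.mem_toFinset, List.mem_map, forall_exists_index,
    and_imp, forall_apply_eq_imp_iff₂]
  intro e he
  have hYX : graphOf (dualConfig (addConfig X B ω)) ≤ graphOf (dualConfig X) :=
    graphOf_mono (dualConfig_anti Set.subset_union_left)
  exact crossing_eq_false_of_mem_dualConfig_addConfig <| mem_of_mem_edgeSet_graphOf <|
    (isAcyclic_graphOf_dualConfig hX).edges_subset_edgeSet_of_reachable hYX hp hω e he

lemma BernoulliFamily.measure_forall_eq_false [MeasurableSpace Ω] {μ : Measure Ω}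
    [IsProbabilityMeasure μ] {p : ℝ} (hB : BernoulliFamily μ p B) (hp : 0 ≤ p)
    (S : Finset (Sym2 V2)) :
    μ {ω | ∀ e ∈ S, B e ω = false} = ENNReal.ofReal (1 - p) ^ S.card := by
  have hfalse (e : Sym2 V2) : μ (B e ⁻¹' {false}) = ENNReal.ofReal (1 - p) := by
    have : B e ⁻¹' {false} = {ω | B e ω = true}ᶜ := by ext; simp
    have hm : MeasurableSet {ω | B e ω = true} := hB.1 e (measurableSet_singleton true)
    rw [this, prob_compl_eq_one_sub hm, hB.2.2, ENNReal.ofReal_sub _ hp, ENNReal.ofReal_one]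
  have : {ω | ∀ e ∈ S, B e ω = false} = ⋂ e ∈ S, B e ⁻¹' {false} := by ext; simp
  rw [this, iIndepFun_iff_measure_inter_preimage_eq_mul.1 hB.2.1 S
    fun _ _ => measurableSet_singleton false, Finset.prod_congr rfl fun e _ => hfalse e,
    Finset.prod_const]

end Bernoulli

/-- Let `X` be an everywhere percolating subgraph of `ℤ²`, `ε ∈ (0,1)`, and
let `Y = Y(X,ε)` be obtained from `X` by `ε`-Bernoulli addition.  Then for any two dual
vertices `x, y`, the probability that `x` and `y` are connected in the dual configuration `Y*`
is at most `(1-ε) ^ |x-y|₁`. -/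
theorem dual_connection_probability_bound
    {Ω : Type} [MeasurableSpace Ω] (μ : Measure Ω) [IsProbabilityMeasure μ]
    (X : Set (Sym2 V2)) (hX : EverywherePercolating X)
    (ε : ℝ) (hε : ε ∈ Set.Ioo (0 : ℝ) 1)
    (B : Sym2 V2 → Ω → Bool) (hB : BernoulliFamily μ ε B)
    (x y : V2) :
    μ {ω | (graphOf (dualConfig (addConfig X B ω))).Reachable x y}
      ≤ ENNReal.ofReal ((1 - ε) ^ dist1 x y) := by
  have hε' : 0 ≤ 1 - ε := by linarith [hε.2]
  by_cases hxy : (graphOf (dualConfig X)).Reachable x y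
  swap
  · have : {ω | (graphOf (dualConfig (addConfig X B ω))).Reachable x y} = ∅ :=
      Set.eq_empty_of_forall_notMem fun ω h =>
        hxy (h.mono (graphOf_mono (dualConfig_anti Set.subset_union_left)))
    simp [this]
  obtain ⟨p, hp⟩ := hxy.exists_isPath
  calc μ {ω | (graphOf (dualConfig (addConfig X B ω))).Reachable x y}
      ≤ μ {ω | ∀ c ∈ (p.edges.map crossing).toFinset, B c ω = false} :=
        measure_mono (setOf_reachable_subset_forall_crossing_eq_false hX hp)
    _ = ENNReal.ofReal (1 - ε) ^ p.length := by
        rw [hB.measure_forall_eq_false hε.1.le, card_toFinset_map_crossing hp.isTrail]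
    _ ≤ ENNReal.ofReal ((1 - ε) ^ dist1 x y) := by
        rw [← ENNReal.ofReal_pow hε']
        exact ENNReal.ofReal_le_ofReal <|
          pow_le_pow_of_le_one hε' (by linarith [hε.1]) (dist1_le_length p)
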